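/- If every entry of a column-stochastic matrix M is strictly positive, then any eigenvalue λ with |λ| = 1 satisfies λ = 1. -/

import Mathlib

/-!
Put `u j = ‖v j‖`. The triangle inequality and `‖λ‖ = 1` give `u ≤ M u` entrywise, and since a
column-stochastic `M` preserves the sum of coordinates, `M u = u`. So in every row the triangle
inequality `‖∑ j, M i j * v j‖ ≤ ∑ j, M i j * ‖v j‖` is an equality; as all `M i j > 0`, this forces
the `v j` to share one phase `c`, i.e. `v = c • u`. Then `M v = c • M u = c • u = v`, so `λ = 1`.
-/

open Finset Matrix
open scoped ComplexOrder

theorem Complex.eq_norm_mul_of_norm_sum_eq_sum_norm {ι : Type*} (s : Finset ι) (z : ι → ℂ)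
    (h : ‖∑ i ∈ s, z i‖ = ∑ i ∈ s, ‖z i‖) :
    ∀ i ∈ s, z i = ‖z i‖ * ((∑ i ∈ s, z i) / ‖∑ i ∈ s, z i‖) := by
  set S := ∑ i ∈ s, z i
  by_cases hS : S = 0
  · have hz := (sum_eq_zero_iff_of_nonneg fun i _ ↦ norm_nonneg (z i)).1 (by rw [← h, hS, norm_zero])
    intro i hi
    simp [norm_eq_zero.1 (hz i hi)]
  have hS' : (‖S‖ : ℂ) ≠ 0 := by simpa using hS
  -- after rotating by `conj S` the real parts add up to the sum of the norms
  have hre_le : ∀ i ∈ s, (starRingEnd ℂ S * z i).re ≤ ‖S‖ * ‖z i‖ := fun i _ ↦ by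
    simpa using re_le_norm (starRingEnd ℂ S * z i)
  have hre_sum : ∑ i ∈ s, (starRingEnd ℂ S * z i).re = ∑ i ∈ s, ‖S‖ * ‖z i‖ := by
    rw [← re_sum, ← mul_sum, ← mul_sum, ← h, conj_mul', ← ofReal_pow, ofReal_re, sq]
  intro i hi
  have hre := (sum_eq_sum_iff_of_le hre_le).1 hre_sum i hi
  have hnonneg : 0 ≤ starRingEnd ℂ S * z i := re_eq_norm.1 (by rw [hre]; simp)
  have hreal : starRingEnd ℂ S * z i = ((‖S‖ * ‖z i‖ : ℝ) : ℂ) := by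
    rw [← hre]; exact eq_re_of_ofReal_le hnonneg
  have hSS : S * starRingEnd ℂ S = (‖S‖ : ℂ) ^ 2 := mul_conj' S
  push_cast at hreal
  rw [mul_div_assoc', eq_div_iff hS']
  refine mul_left_cancel₀ hS' ?_
  linear_combination S * hreal - z i * hSS

section StochasticMatrix

variable {n R : Type*} [Fintype n]

theorem Matrix.sum_mulVec_of_sum_col_eq_one [NonAssocSemiring R] {M : Matrix n n R}
    (hcol : ∀ j, ∑ i, M i j = 1) (u : n → R) : ∑ i, (M *ᵥ u) i = ∑ j, u j := by
  simp only [mulVec, dotProduct]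
  rw [sum_comm]
  simp [← sum_mul, hcol]

theorem Matrix.mulVec_eq_self_of_le_mulVec [Semiring R] [PartialOrder R]
    [IsOrderedCancelAddMonoid R] {M : Matrix n n R} (hcol : ∀ j, ∑ i, M i j = 1) {u : n → R}
    (hu : u ≤ M *ᵥ u) : M *ᵥ u = u :=
  funext fun i ↦ ((sum_eq_sum_iff_of_le fun i _ ↦ hu i).1
    (M.sum_mulVec_of_sum_col_eq_one hcol u).symm i (mem_univ i)).symm

end StochasticMatrix

section ComplexVector

variable {m n : Type*} [Fintype n]

theorem Matrix.norm_map_ofReal_mulVec_le {M : Matrix m n ℝ} (hM : ∀ i j, 0 ≤ M i j) (v : n → ℂ)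
    (i : m) : ‖(M.map Complex.ofReal *ᵥ v) i‖ ≤ (M *ᵥ fun j ↦ ‖v j‖) i := by
  simp only [mulVec, dotProduct, map_apply]
  refine (norm_sum_le _ _).trans_eq (sum_congr rfl fun j _ ↦ ?_)
  rw [norm_mul, Complex.norm_real, Real.norm_of_nonneg (hM i j)]

theorem Matrix.exists_eq_smul_norm_of_norm_mulVec_eq {M : Matrix m n ℝ} {i : m}
    (hM : ∀ j, 0 < M i j) {v : n → ℂ}
    (h : ‖(M.map Complex.ofReal *ᵥ v) i‖ = (M *ᵥ fun j ↦ ‖v j‖) i) :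
    ∃ c : ℂ, v = c • fun j ↦ (‖v j‖ : ℂ) := by
  have hnorm : ∀ j, ‖(M i j : ℂ) * v j‖ = M i j * ‖v j‖ := fun j ↦ by
    rw [norm_mul, Complex.norm_real, Real.norm_of_nonneg (hM j).le]
  set z : n → ℂ := fun j ↦ (M i j : ℂ) * v j
  have hphase := Complex.eq_norm_mul_of_norm_sum_eq_sum_norm univ z
    (by simpa only [z, hnorm, mulVec, dotProduct, map_apply] using h)
  refine ⟨(∑ j, z j) / ‖∑ j, z j‖, funext fun j ↦ ?_⟩
  have hj := hphase j (mem_univ j)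
  rw [hnorm, Complex.ofReal_mul, mul_assoc] at hj
  simpa [mul_comm] using mul_left_cancel₀ (Complex.ofReal_ne_zero.2 (hM j).ne') hj

end ComplexVector

theorem stmt_7 (n : ℕ) (M : Matrix (Fin n) (Fin n) ℝ)
    (hpos : ∀ i j, 0 < M i j) (hcol : ∀ j, ∑ i, M i j = 1)
    (lam : ℂ) (v : Fin n → ℂ) (hv : v ≠ 0)
    (heig : (M.map (Complex.ofReal)).mulVec v = lam • v)
    (hlam : ‖lam‖ = 1) :
    lam = 1 := by
  set u : Fin n → ℝ := fun j ↦ ‖v j‖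
  have hnorm : ∀ i, ‖(M.map Complex.ofReal *ᵥ v) i‖ = u i := fun i ↦ by
    simp [u, heig, hlam]
  have hfix : M *ᵥ u = u := M.mulVec_eq_self_of_le_mulVec hcol fun i ↦
    (hnorm i).symm.trans_le (M.norm_map_ofReal_mulVec_le (fun i j ↦ (hpos i j).le) v i)
  obtain ⟨i₀, -⟩ := Function.ne_iff.1 hv
  obtain ⟨c, hc⟩ := M.exists_eq_smul_norm_of_norm_mulVec_eq (hpos i₀)
    ((hnorm i₀).trans (congrFun hfix i₀).symm)
  have hMv : M.map Complex.ofReal *ᵥ v = v := by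
    rw [hc, mulVec_smul]
    congr 1
    funext i
    exact (RingHom.map_mulVec Complex.ofRealHom M u i).symm.trans (congrArg _ (congrFun hfix i))
  exact smul_left_injective ℂ hv (heig.symm.trans (hMv.trans (one_smul ℂ v).symm))
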